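/- arXiv:2305.03033 — 2 statements merged into one kernel-verified Lean document; each statement's English description precedes it below -/
import Mathlib

section
/- With R a commutative ring, R^s ⊂ R a subring such that R is free of rank 2 over R^s with basis {1, u} for some unit u ∈ R^×, and such that u·1* expressed in the dual basis has unit determinant, the functor M ↦ R ⊗_{R^s} M from R^s-modules to R-modules is naturally isomorphic to M ↦ Hom_{R^s}(R, M). Consequently the functor N ↦ R ⊗_{R^s} N (restrict then induce) from R-modules to R-modules is self-adjoint. -/
open scoped TensorProduct

/-!
The form `τ = 1*` makes `R` a Frobenius `A`-algebra: the matrix of `r ↦ τ (r * -)` from the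
basis `b` to the dual basis is the one whose determinant is assumed to be a unit, so this map is
an isomorphism `R ≃ Hom_A(R, A)`. Hence `R ⊗_A M ≃ Hom_A(R, A) ⊗_A M ≃ Hom_A(R, M)` naturally
in `M`, and the left action of `r` becomes precomposition with `(· * r)`, i.e. induction agrees
with coinduction. Composing the two adjunctions gives
`Hom_R(R ⊗_A N, N') ≃ Hom_A(N, N') ≃ Hom_R(N, Hom_A(R, N')) ≃ Hom_R(N, R ⊗_A N')`.
-/

section Frobenius

variable {A R : Type*} [CommSemiring A] [CommSemiring R] [Algebra A R] (τ : Module.Dual A R)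

def frobeniusDual : R →ₗ[A] Module.Dual A R :=
  (LinearMap.mul A R).compr₂ τ

@[simp]
theorem frobeniusDual_apply (r z : R) : frobeniusDual τ r z = τ (r * z) := rfl

variable {τ} (hτ : Function.Bijective (frobeniusDual τ)) [Module.Projective A R]
  [Module.Finite A R] (M : Type*) [AddCommMonoid M] [Module A M]

noncomputable def tensorEquivLinearMapOfFrobenius : R ⊗[A] M ≃ₗ[A] (R →ₗ[A] M) :=
  (LinearEquiv.rTensor M (LinearEquiv.ofBijective _ hτ)).trans (dualTensorHomEquiv A R M)

@[simp]
theorem tensorEquivLinearMapOfFrobenius_tmul (r : R) (m : M) (z : R) :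
    tensorEquivLinearMapOfFrobenius hτ M (r ⊗ₜ m) z = τ (r * z) • m := rfl

theorem tensorEquivLinearMapOfFrobenius_smul (r : R) (x : R ⊗[A] M) (z : R) :
    tensorEquivLinearMapOfFrobenius hτ M (r • x) z =
      tensorEquivLinearMapOfFrobenius hτ M x (z * r) := by
  induction x using TensorProduct.induction_on with
  | zero => simp
  | tmul s m =>
    simp only [TensorProduct.smul_tmul', smul_eq_mul, tensorEquivLinearMapOfFrobenius_tmul]
    congr 2
    ring
  | add x y hx hy => simp only [smul_add, map_add, LinearMap.add_apply, hx, hy]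

theorem tensorEquivLinearMapOfFrobenius_lTensor {N : Type*} [AddCommMonoid N] [Module A N]
    (g : M →ₗ[A] N) (x : R ⊗[A] M) :
    tensorEquivLinearMapOfFrobenius hτ N (g.lTensor R x) =
      g ∘ₗ tensorEquivLinearMapOfFrobenius hτ M x := by
  induction x using TensorProduct.induction_on with
  | zero => simp
  | tmul s m => ext z; simp
  | add x y hx hy => simp only [map_add, hx, hy, LinearMap.comp_add]

end Frobenius

theorem bijective_frobeniusDual_of_isUnit_det {A R ι : Type*} [CommRing A] [CommRing R]
    [Algebra A R] [Fintype ι] [DecidableEq ι] (τ : Module.Dual A R) (b : Module.Basis ι A R)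
    (h : IsUnit (b.dualBasis.det fun i => τ ∘ₗ LinearMap.mulLeft A (b i))) :
    Function.Bijective (frobeniusDual τ) := by
  have h' : IsUnit (LinearMap.toMatrix b b.dualBasis (frobeniusDual τ)).det := by
    rw [LinearMap.toMatrix_eq_basisToMatrix, ← Module.Basis.det_apply]
    exact h
  rw [← LinearEquiv.coe_ofIsUnitDet h']
  exact LinearEquiv.bijective _

section Coinduction

variable {A R N N' P : Type*} [CommSemiring A] [Semiring R] [Algebra A R]
  [AddCommMonoid N] [Module A N] [Module R N] [IsScalarTower A R N]
  [AddCommMonoid N'] [Module A N']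
  [AddCommMonoid P] [Module A P] [Module R P] [IsScalarTower A R P]

/-- `E` identifies `P` with the coinduced module `Hom_A(R, N')`, where `r` acts by precomposition
with `(· * r)`. -/
def linearMapEquivOfCoinduced (E : P ≃ₗ[A] (R →ₗ[A] N'))
    (hE : ∀ (r : R) (x : P) (z : R), E (r • x) z = E x (z * r)) :
    (N →ₗ[R] P) ≃ (N →ₗ[A] N') where
  toFun g := LinearMap.applyₗ (1 : R) ∘ₗ E.toLinearMap ∘ₗ g.restrictScalars A
  invFun f :=
    { toFun n := E.symm (f ∘ₗ (LinearMap.toSpanSingleton R N n).restrictScalars A)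
      map_add' n m := by
        rw [← map_add]; congr 1; ext z; simp [smul_add]
      map_smul' r n := by
        apply E.injective
        ext z
        simp [hE, mul_smul] }
  left_inv g := by
    ext n
    apply E.injective
    ext z
    simp [hE]
  right_inv f := by
    ext n
    simp

end Coinduction

theorem stmt2_general {A R : Type} [CommRing A] [CommRing R] [Algebra A R]
    (b : Module.Basis (Fin 2) A R)
    (hdet : IsUnit (b.dualBasis.det
      (fun i => (b.coord 0) ∘ₗ (LinearMap.mulLeft A (b i))))) :
    (∃ e : ∀ (M : Type) [AddCommGroup M] [Module A M],
        (R ⊗[A] M) ≃ₗ[A] (R →ₗ[A] M),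
      (∀ (M : Type) [AddCommGroup M] [Module A M] (r : R) (x : R ⊗[A] M) (z : R),
          e M (r • x) z = e M x (z * r)) ∧
      (∀ (M N : Type) [AddCommGroup M] [Module A M] [AddCommGroup N] [Module A N]
          (g : M →ₗ[A] N) (x : R ⊗[A] M),
          e N (LinearMap.lTensor R g x) = g ∘ₗ (e M x))) ∧
    (∀ (N N' : Type) [AddCommGroup N] [Module A N] [Module R N] [IsScalarTower A R N]
        [AddCommGroup N'] [Module A N'] [Module R N'] [IsScalarTower A R N'],
      Nonempty ((R ⊗[A] N →ₗ[R] N') ≃ (N →ₗ[R] R ⊗[A] N'))) := by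
  have := Module.Free.of_basis b
  have := Module.Finite.of_basis b
  have hτ := bijective_frobeniusDual_of_isUnit_det _ b hdet
  refine ⟨⟨fun M _ _ => tensorEquivLinearMapOfFrobenius hτ M,
    fun M _ _ => tensorEquivLinearMapOfFrobenius_smul hτ M,
    fun M N _ _ _ _ => tensorEquivLinearMapOfFrobenius_lTensor hτ M⟩, ?_⟩
  intro N N' _ _ _ _ _ _ _ _
  exact ⟨(LinearMap.liftBaseChangeEquiv R).toEquiv.symm.trans
    (linearMapEquivOfCoinduced (tensorEquivLinearMapOfFrobenius hτ N')
      (tensorEquivLinearMapOfFrobenius_smul hτ N')).symm⟩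

/-- if `R` is free of rank 2 over `R^s = A` with basis `{1, u}` for a unit `u`,
and the `A`-linear map `R → Hom_A(R, A)`, `r ↦ (x ↦ 1*(r·x))` has unit determinant in the
dual basis, then `M ↦ R ⊗_A M` is naturally isomorphic to `M ↦ Hom_A(R, M)` (compatibly
with the `R`-actions), and consequently induction `N ↦ R ⊗_A N` is self-adjoint. -/
theorem stmt2 {A R : Type} [CommRing A] [CommRing R] [Algebra A R]
    (u : R) (hu : IsUnit u)
    (b : Module.Basis (Fin 2) A R) (hb0 : b 0 = 1) (hb1 : b 1 = u)
    (hdet : IsUnit (b.dualBasis.det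
      (fun i => (b.coord 0) ∘ₗ (LinearMap.mulLeft A (b i))))) :
    (∃ e : ∀ (M : Type) [AddCommGroup M] [Module A M],
        (R ⊗[A] M) ≃ₗ[A] (R →ₗ[A] M),
      (∀ (M : Type) [AddCommGroup M] [Module A M] (r : R) (x : R ⊗[A] M) (z : R),
          e M (r • x) z = e M x (z * r)) ∧
      (∀ (M N : Type) [AddCommGroup M] [Module A M] [AddCommGroup N] [Module A N]
          (g : M →ₗ[A] N) (x : R ⊗[A] M),
          e N (LinearMap.lTensor R g x) = g ∘ₗ (e M x))) ∧
    (∀ (N N' : Type) [AddCommGroup N] [Module A N] [Module R N] [IsScalarTower A R N]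
        [AddCommGroup N'] [Module A N'] [Module R N'] [IsScalarTower A R N'],
      Nonempty ((R ⊗[A] N →ₗ[R] N') ≃ (N →ₗ[R] R ⊗[A] N'))) :=
  stmt2_general b hdet
end

section
/- Let W be a finite group acting on a lattice Λ, R = k[Λ] over a field k, and suppose R is free as a module over the invariant ring R^W (e.g. by the Pittie–Steinberg theorem when W is the Weyl group acting on the coweight lattice of an adjoint group). Then the natural map R ⊗_{R^W} R → ∏_{w ∈ W} R, sending f ⊗ g to the tuple ((w·f)·g)_{w ∈ W}, is injective. -/
open scoped TensorProduct
open AddMonoidAlgebra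

/-- The subalgebra of invariants of a group acting by algebra automorphisms. -/
def invariantsSubalgebra {k A W : Type} [CommSemiring k] [Semiring A] [Algebra k A] [Monoid W]
    (σ : W →* (A ≃ₐ[k] A)) : Subalgebra k A where
  carrier := {f | ∀ w, σ w f = f}
  mul_mem' := fun ha hb w => by rw [map_mul, ha w, hb w]
  add_mem' := fun ha hb w => by rw [map_add, ha w, hb w]
  algebraMap_mem' := fun r w => (σ w).commutes r

/-- The group structure on additive automorphisms (composition), as `AddAut` had in older Mathlib. -/
instance addEquivSelfGroup (A : Type) [Add A] : Group (A ≃+ A) where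
  mul g h := AddEquiv.trans h g
  one := AddEquiv.refl _
  inv := AddEquiv.symm
  mul_assoc _ _ _ := rfl
  one_mul _ := rfl
  mul_one _ := rfl
  inv_mul_cancel := AddEquiv.self_trans_symm

/-!
Write `x ∈ R ⊗_{R^W} R` as `∑ eᵢ ⊗ cᵢ` in a basis `(eᵢ)` of `R` over `R^W`; then `φ x = 0` says
`∑ cᵢ (w • eᵢ) = 0` for every `w`. In the fraction field `L` of `R` the `W`-invariants are the
fraction field of `R^W`, so the `eᵢ` stay linearly independent over `L^W`, and Artin's lemma makes
the vectors `(w • eᵢ)_w` linearly independent over `L`. Hence every `cᵢ` vanishes.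
-/

section Artin

variable (G : Type*) [Group G] {F : Type*} [Field F] [MulSemiringAction G F] {ι : Type*}

theorem FixedPoints.linearIndependent_toFun {v : ι → F}
    (hv : LinearIndependent (FixedPoints.subfield G F) v) :
    LinearIndependent F (MulAction.toFun G F ∘ v) := by
  rw [← linearIndepOn_range_iff hv.injective, linearIndepOn_iff_linearIndepOn_finset]
  exact fun t ht ↦ linearIndependent_smul_of_linearIndependent G F
    (((linearIndepOn_id_range_iff hv.injective).mpr hv).mono ht)

theorem LinearIndependent.fixedPoints_of_isInvariant {K : Type*} [CommRing K] [Algebra K F]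
    [Algebra.IsInvariant K F G] {v : ι → F} (hv : LinearIndependent K v) :
    LinearIndependent (FixedPoints.subfield G F) v := by
  rw [linearIndependent_iff'] at hv ⊢
  intro s c hc i hi
  choose a ha using fun j ↦ Algebra.IsInvariant.isInvariant (A := K) (c j).1 (c j).2
  have : a i = 0 :=
    hv s a (by simpa [Algebra.smul_def, ha, FixedPoints.coe_algebraMap] using hc) i hi
  exact Subtype.ext (by rw [← ha i, this, map_zero]; rfl)

end Artin

section Invariants

variable {A B : Type*} [CommRing A] [CommRing B] [Algebra A B] (G : Type*) [Group G] [Finite G]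
  [MulSemiringAction G B] [Algebra.IsInvariant A B G] [SMulCommClass G A B] {ι : Type*}

theorem LinearIndependent.toFun_algebraMap (K L : Type*) [Field K] [Field L] [Algebra K L]
    [Algebra A K] [Algebra B L] [Algebra A L] [IsFractionRing A K] [IsFractionRing B L]
    [IsScalarTower A K L] [IsScalarTower A B L] [MulSemiringAction G L] [SMulDistribClass G B L]
    {e : ι → B} (he : LinearIndependent A e) :
    LinearIndependent L (MulAction.toFun G L ∘ algebraMap B L ∘ e) := by
  have := IsFractionRing.isInvariant G A B K L
  have hL : LinearIndependent A (algebraMap B L ∘ e) :=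
    he.map' (IsScalarTower.toAlgHom A B L).toLinearMap
      (LinearMap.ker_eq_bot.mpr (IsFractionRing.injective B L))
  exact FixedPoints.linearIndependent_toFun G
    (((LinearIndependent.iff_fractionRing A K).mp hL).fixedPoints_of_isInvariant G)

theorem LinearIndependent.toFun_of_isInvariant [IsDomain B] [FaithfulSMul A B] {e : ι → B}
    (he : LinearIndependent A e) : LinearIndependent B (MulAction.toFun G B ∘ e) := by
  have := IsDomain.of_faithfulSMul A B
  let L := FractionRing B
  let := IsFractionRing.mulSemiringAction G B L
  let := FractionRing.liftAlgebra A L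
  have hL :=
    (LinearIndependent.iff_fractionRing B L).mpr (he.toFun_algebraMap G (FractionRing A) L)
  refine LinearIndependent.of_comp (LinearMap.compLeft (Algebra.linearMap B L) G) ?_
  have hcomp : LinearMap.compLeft (Algebra.linearMap B L) G ∘ MulAction.toFun G B ∘ e =
      MulAction.toFun G L ∘ algebraMap B L ∘ e := by
    ext i g
    simp [algebraMap.coe_smul']
  rwa [hcomp]

end Invariants

section Tensor

variable {A B : Type*} [CommRing A] [CommRing B] [IsDomain B] [Algebra A B] [FaithfulSMul A B]
  [Module.Free A B] (G : Type*) [Group G] [Finite G] [MulSemiringAction G B]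
  [Algebra.IsInvariant A B G] [SMulCommClass G A B]

theorem injective_of_map_tmul_eq_smul_mul (φ : B ⊗[A] B →+ (G → B))
    (hφ : ∀ b c : B, φ (b ⊗ₜ c) = fun g ↦ (g • b) * c) : Function.Injective φ := by
  let e := Module.Free.chooseBasis A B
  refine (injective_iff_map_eq_zero φ).mpr fun x hx ↦ ?_
  obtain ⟨c, rfl⟩ := TensorProduct.eq_repr_basis_left e x
  have hc : Finsupp.linearCombination B (MulAction.toFun G B ∘ e) c = 0 := by
    rw [← hx, map_finsuppSum, Finsupp.linearCombination_apply]
    refine Finsupp.sum_congr fun i _ ↦ ?_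
    ext g
    simp [hφ, mul_comm]
  simp [linearIndependent_iff.mp (e.linearIndependent.toFun_of_isInvariant G) c hc]

end Tensor

theorem invariantsSubalgebra.injective_of_map_tmul {k A W : Type} [CommRing k] [CommRing A]
    [IsDomain A] [Algebra k A] [Group W] [Finite W] (σ : W →* (A ≃ₐ[k] A))
    [Module.Free (invariantsSubalgebra σ) A]
    (φ : A ⊗[invariantsSubalgebra σ] A →+ (W → A))
    (hφ : ∀ f g : A, φ (f ⊗ₜ g) = fun w ↦ σ w f * g) : Function.Injective φ := by
  let := MulSemiringAction.compHom A σ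
  have : Algebra.IsInvariant (invariantsSubalgebra σ) A W := ⟨fun f hf ↦ ⟨⟨f, hf⟩, rfl⟩⟩
  have : SMulCommClass W (invariantsSubalgebra σ) A :=
    ⟨fun w s f ↦ show σ w (s * f) = s * σ w f by rw [map_mul, s.2 w]⟩
  exact injective_of_map_tmul_eq_smul_mul W φ hφ

theorem stmt3_general {k Λ W : Type} [Field k] [AddCommGroup Λ] [Module.Free ℤ Λ]
    [Group W] [Finite W]
    (σ : W →* (AddMonoidAlgebra k Λ ≃ₐ[k] AddMonoidAlgebra k Λ))
    (hfree : Module.Free (invariantsSubalgebra σ) (AddMonoidAlgebra k Λ))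
    (φ : (AddMonoidAlgebra k Λ ⊗[(invariantsSubalgebra σ)] AddMonoidAlgebra k Λ) →+
      (W → AddMonoidAlgebra k Λ))
    (hφ : ∀ f g : AddMonoidAlgebra k Λ,
      φ (f ⊗ₜ[(invariantsSubalgebra σ)] g) = fun w => σ w f * g) :
    Function.Injective φ := by
  have : TwoUniqueSums Λ :=
    .of_injective_addHom _ (Module.Free.chooseBasis ℤ Λ).repr.injective inferInstance
  have : IsDomain (AddMonoidAlgebra k Λ) := NoZeroDivisors.to_isDomain _
  exact invariantsSubalgebra.injective_of_map_tmul σ φ hφ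

/-- for a finite group `W` acting on the lattice `Λ` and hence on `R = k[Λ]`,
if `R` is free over `R^W`, then the map `R ⊗_{R^W} R → ∏_{w ∈ W} R`,
`f ⊗ g ↦ ((w·f)·g)_w`, is injective. -/
theorem stmt3 {k Λ W : Type} [Field k] [AddCommGroup Λ] [Module.Free ℤ Λ] [Module.Finite ℤ Λ]
    [Group W] [Finite W]
    (ρ : W →* (Λ ≃+ Λ))
    (σ : W →* (AddMonoidAlgebra k Λ ≃ₐ[k] AddMonoidAlgebra k Λ))
    (hσρ : ∀ (w : W) (l : Λ),
      σ w (AddMonoidAlgebra.single l (1 : k)) = AddMonoidAlgebra.single (ρ w l) (1 : k))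
    (hfree : Module.Free (invariantsSubalgebra σ) (AddMonoidAlgebra k Λ))
    (φ : (AddMonoidAlgebra k Λ ⊗[(invariantsSubalgebra σ)] AddMonoidAlgebra k Λ) →+
      (W → AddMonoidAlgebra k Λ))
    (hφ : ∀ f g : AddMonoidAlgebra k Λ,
      φ (f ⊗ₜ[(invariantsSubalgebra σ)] g) = fun w => σ w f * g) :
    Function.Injective φ :=
  stmt3_general σ hfree φ hφ
end
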